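/- arXiv:1208.5269 — 2 statements merged into one kernel-verified Lean document; each statement's English description precedes it below -/
import Mathlib

section
/- Fix p, q ∈ (0,1) and P > 0. Define ν = [P(p−q) − 1 + √((P(p−q) − 1)² + 4pP(1−q))] / (2P(1−q)). Then 0 < ν ≤ p, and ν together with α = (p − ν)/(νP(1−p)) satisfies the system: p/(1 + αP) + 1 − p = 1/(1 + ανP) = q/(1 + νP) + 1 − q. -/
/-- Explicit solution of the fixed-point equations for `I₂` with a Haar sensing
matrix: with `ν` given in closed form and `α = (p − ν)/(νP(1−p))`, one has
`0 < ν ≤ p` and `p/(1+αP) + 1 − p = 1/(1+ανP) = q/(1+νP) + 1 − q`. -/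
theorem haar_fixed_point_solution (p q P : ℝ)
    (hp0 : 0 < p) (hp1 : p < 1) (hq0 : 0 < q) (hq1 : q < 1) (hP : 0 < P)
    (ν α : ℝ)
    (hν : ν = (P * (p - q) - 1 + Real.sqrt ((P * (p - q) - 1) ^ 2 + 4 * p * P * (1 - q))) /
      (2 * P * (1 - q)))
    (hα : α = (p - ν) / (ν * P * (1 - p))) :
    (0 < ν ∧ ν ≤ p) ∧
    p / (1 + α * P) + 1 - p = 1 / (1 + α * ν * P) ∧
    1 / (1 + α * ν * P) = q / (1 + ν * P) + 1 - q := by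
  set b : ℝ := P * (p - q) - 1 with hb
  set s : ℝ := Real.sqrt (b ^ 2 + 4 * p * P * (1 - q)) with hs
  have hq1' : 0 < 1 - q := by linarith
  have hp1' : 0 < 1 - p := by linarith
  have hcpos : 0 < 4 * p * P * (1 - q) := by positivity
  have hsnn : 0 ≤ s := Real.sqrt_nonneg _
  have hssq : s ^ 2 = b ^ 2 + 4 * p * P * (1 - q) := by
    rw [hs]; exact Real.sq_sqrt (by positivity)
  have hden : (0:ℝ) < 2 * P * (1 - q) := by positivity
  have hνeq : 2 * P * (1 - q) * ν = b + s := by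
    rw [hν]; field_simp
  -- numerator positive
  have hnum : 0 < b + s := by nlinarith [sq_nonneg (s + b), sq_nonneg (s - b)]
  have hν0 : 0 < ν := by
    rw [hν]; exact div_pos hnum hden
  -- quadratic identity
  have hquad : P * (1 - q) * ν ^ 2 - b * ν - p = 0 := by
    have h2 : (2 * P * (1 - q) * ν - b) ^ 2 = b ^ 2 + 4 * p * P * (1 - q) := by
      rw [show 2 * P * (1 - q) * ν - b = s by linarith, hssq]
    nlinarith [h2]
  -- ν ≤ p
  have hsle : s ≤ 2 * P * (1 - q) * p - b := by
    have ht : 0 ≤ 2 * P * (1 - q) * p - b := by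
      rw [hb]
      nlinarith [mul_pos (mul_pos hP hp0) hq1', mul_pos (mul_pos hP hq0) hp1']
    have : b ^ 2 + 4 * p * P * (1 - q) ≤ (2 * P * (1 - q) * p - b) ^ 2 := by
      rw [hb]
      nlinarith [mul_pos hcpos (mul_pos (mul_pos hP hq0) hp1')]
    calc s ≤ Real.sqrt ((2 * P * (1 - q) * p - b) ^ 2) := Real.sqrt_le_sqrt this
      _ = 2 * P * (1 - q) * p - b := Real.sqrt_sq ht
  have hνp : ν ≤ p := by
    have : 2 * P * (1 - q) * ν ≤ 2 * P * (1 - q) * p := by linarith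
    exact le_of_mul_le_mul_left this hden
  have hν1 : ν < 1 := lt_of_le_of_lt hνp hp1
  -- denominators
  have hd1 : ν * P * (1 - p) ≠ 0 := by positivity
  have hανP : 1 + α * ν * P = (1 - ν) / (1 - p) := by
    rw [hα]; field_simp; ring
  have hαP : 1 + α * P = p * (1 - ν) / (ν * (1 - p)) := by
    rw [hα]; field_simp; ring
  have h1ν : 0 < 1 - ν := by linarith
  have hd2 : 1 + α * ν * P > 0 := by rw [hανP]; positivity
  have hd3 : 1 + α * P > 0 := by rw [hαP]; positivity
  have hd4 : (0:ℝ) < 1 + ν * P := by positivity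
  refine ⟨⟨hν0, hνp⟩, ?_, ?_⟩
  · rw [hανP, hαP]
    field_simp
    ring
  · rw [hανP, one_div_div]
    have hq' : P * (1 - q) * ν ^ 2 - (P * (p - q) - 1) * ν - p = 0 := hquad
    field_simp
    ring_nf
    ring_nf at hq'
    linarith [hq']
end

section
/- Let 0 < p < q < 1. Then (1−p)·log(1/(1−p)) − (q−p)·log(q/(q−p)) < h(q), where h(q) = q log(1/q) + (1−q) log(1/(1−q)) is the binary entropy. -/
/-- Key inequality in the high-SNR converse: for `0 < p < q < 1`,
`(1−p)·log(1/(1−p)) − (q−p)·log(q/(q−p)) < h(q)` where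
`h(q) = q log(1/q) + (1−q) log(1/(1−q))` is the binary entropy. -/
theorem converse_key_inequality (p q : ℝ) (hp : 0 < p) (hpq : p < q) (hq : q < 1) :
    (1 - p) * Real.log (1 / (1 - p)) - (q - p) * Real.log (q / (q - p)) <
      q * Real.log (1 / q) + (1 - q) * Real.log (1 / (1 - q)) := by
  have hq0 : 0 < q := hp.trans hpq
  have hqp : 0 < q - p := by linarith
  have h1p : 0 < 1 - p := by linarith
  have h1q : 0 < 1 - q := by linarith
  rw [Real.log_div hq0.ne' hqp.ne', one_div, one_div, one_div,
    Real.log_inv, Real.log_inv, Real.log_inv]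
  have h1 : Real.log (q - p) < Real.log (1 - p) := Real.log_lt_log hqp (by linarith)
  have h2 : Real.log (1 - q) < Real.log (1 - p) := Real.log_lt_log h1q (by linarith)
  have h3 : Real.log q < 0 := Real.log_neg hq0 hq
  nlinarith [mul_pos hqp (sub_pos.mpr h1), mul_pos h1q (sub_pos.mpr h2),
    mul_pos hp (neg_pos.mpr h3)]
end
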